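/- Let A and B be real symmetric n×n matrices, and let λ₁(A) ≤ ⋯ ≤ λ_n(A) and λ₁(B) ≤ ⋯ ≤ λ_n(B) be their eigenvalues listed in nondecreasing order with multiplicity. Then |i⁺(A) − i⁺(B)| ≤ card{ i ∈ {1,…,n} : |λ_i(B)| ≤ ‖A − B‖_F }, where ‖·‖_F is the Frobenius norm. (In particular, the change in index between A and B is at most the number of eigenvalues of B of absolute value at most ‖A − B‖_F.) -/

import Mathlib

open scoped BigOperators

/-- The Frobenius norm of a real matrix. -/
noncomputable def frobNorm {n : ℕ} (M : Matrix (Fin n) (Fin n) ℝ) : ℝ :=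
  Real.sqrt (∑ i, ∑ j, (M i j) ^ 2)

/-!
By the min-max principle, the number of eigenvalues of a symmetric operator `T` exceeding `c` is
the largest dimension of a subspace on which `⟪T x, x⟫ > c ‖x‖²`. With `r = ‖A - B‖_F` we have
`|⟪A x, x⟫ - ⟪B x, x⟫| ≤ ‖(A - B) x‖ ‖x‖ ≤ r ‖x‖²`, so a subspace on which the form of `A` is
positive is one on which the form of `B` exceeds `-r`, and a subspace on which the form of `B`
exceeds `r` is one on which the form of `A` is positive. Hence
`#{λ(B) > r} ≤ i⁺(A) ≤ #{λ(B) > -r}`, and both outer counts differ from `i⁺(B)` by at most the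
number of eigenvalues of `B` in `[-r, r]`.
-/

open Finset Module Matrix WithLp
open scoped RealInnerProductSpace

section Eigenbasis

variable {ι E : Type*} [Fintype ι] [NormedAddCommGroup E] [InnerProductSpace ℝ E]
  {T : E →ₗ[ℝ] E} {v : OrthonormalBasis ι ℝ E} {μ : ι → ℝ}

theorem inner_map_self_eq_sum_mul_sq (hT : ∀ i, T (v i) = μ i • v i) (x : E) :
    ⟪T x, x⟫ = ∑ i, μ i * ⟪v i, x⟫ ^ 2 := by
  nth_rw 1 [← v.sum_repr' x]
  simp only [map_sum, map_smul, hT, smul_smul, sum_inner, real_inner_smul_left]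
  exact sum_congr rfl fun i _ => by ring

theorem inner_map_self_le_of_inner_eq_zero (hT : ∀ i, T (v i) = μ i • v i) {d : ℝ} {x : E}
    (hx : ∀ i, d < μ i → ⟪v i, x⟫ = 0) : ⟪T x, x⟫ ≤ d * ‖x‖ ^ 2 := by
  rw [inner_map_self_eq_sum_mul_sq hT, ← v.sum_sq_inner_right, mul_sum]
  refine sum_le_sum fun i _ => ?_
  rcases le_or_gt (μ i) d with h | h
  · exact mul_le_mul_of_nonneg_right h (sq_nonneg _)
  · simp [hx i h]

theorem lt_inner_map_self_of_inner_eq_zero (hT : ∀ i, T (v i) = μ i • v i) {c : ℝ} {x : E}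
    (hx : ∀ i, μ i ≤ c → ⟪v i, x⟫ = 0) (hx0 : x ≠ 0) : c * ‖x‖ ^ 2 < ⟪T x, x⟫ := by
  obtain ⟨j, hj⟩ : ∃ j, ⟪v j, x⟫ ≠ 0 := by
    by_contra! h
    exact hx0 (by simpa [h] using (v.sum_repr' x).symm)
  have hcj : c < μ j := by
    by_contra! h
    exact hj (hx j h)
  rw [inner_map_self_eq_sum_mul_sq hT, ← v.sum_sq_inner_right, mul_sum]
  refine sum_lt_sum (fun i _ => ?_) ⟨j, mem_univ j, by gcongr⟩
  rcases le_or_gt (μ i) c with h | h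
  · simp [hx i h]
  · exact mul_le_mul_of_nonneg_right h.le (sq_nonneg _)

theorem finrank_le_card_of_lt_inner_map_self (hT : ∀ i, T (v i) = μ i • v i) {d : ℝ}
    (W : Submodule ℝ E) (hW : ∀ x ∈ W, x ≠ 0 → d * ‖x‖ ^ 2 < ⟪T x, x⟫) :
    finrank ℝ W ≤ #{i | d < μ i} := by
  let coeffs : W →ₗ[ℝ] ({i // d < μ i} → ℝ) :=
    LinearMap.pi fun i => (innerₛₗ ℝ (v i)).comp W.subtype
  have hinj : Function.Injective coeffs := by
    rw [← LinearMap.ker_eq_bot, LinearMap.ker_eq_bot']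
    intro x hx
    by_contra hx0
    have hle := inner_map_self_le_of_inner_eq_zero hT (x := (x : E))
      fun i hi => congrFun hx ⟨i, hi⟩
    exact (hW x x.2 (by simpa using hx0)).not_ge hle
  simpa [Fintype.card_subtype] using LinearMap.finrank_le_finrank_of_injective hinj

theorem exists_finrank_eq_card_lt_inner_map_self (hT : ∀ i, T (v i) = μ i • v i) (c : ℝ) :
    ∃ W : Submodule ℝ E, finrank ℝ W = #{i | c < μ i} ∧
      ∀ x ∈ W, x ≠ 0 → c * ‖x‖ ^ 2 < ⟪T x, x⟫ := by
  let w : {i // c < μ i} → E := v ∘ Subtype.val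
  refine ⟨Submodule.span ℝ (Set.range w), ?_, fun x hx hx0 => ?_⟩
  · rw [finrank_span_eq_card (v.orthonormal.linearIndependent.comp _ Subtype.val_injective),
      Fintype.card_subtype]
  refine lt_inner_map_self_of_inner_eq_zero hT (fun i hi => ?_) hx0
  have hspan : Submodule.span ℝ (Set.range w) ≤ (ℝ ∙ v i)ᗮ := by
    rw [Submodule.span_le, Set.range_subset_iff]
    intro j
    rw [SetLike.mem_coe, Submodule.mem_orthogonal_singleton_iff_inner_right]
    exact v.orthonormal.2 fun h => (h ▸ hi).not_gt j.2
  exact (Submodule.mem_orthogonal_singleton_iff_inner_right).mp (hspan hx)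

theorem card_lt_le_card_lt_of_lt_inner_imp {T' : E →ₗ[ℝ] E} {v' : OrthonormalBasis ι ℝ E}
    {μ' : ι → ℝ} (hT : ∀ i, T (v i) = μ i • v i) (hT' : ∀ i, T' (v' i) = μ' i • v' i)
    {c d : ℝ} (H : ∀ x, x ≠ 0 → c * ‖x‖ ^ 2 < ⟪T x, x⟫ → d * ‖x‖ ^ 2 < ⟪T' x, x⟫) :
    #{i | c < μ i} ≤ #{i | d < μ' i} := by
  obtain ⟨W, hWdim, hW⟩ := exists_finrank_eq_card_lt_inner_map_self hT c
  exact hWdim ▸ finrank_le_card_of_lt_inner_map_self hT' W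
    fun x hx hx0 => H x hx0 (hW x hx hx0)

end Eigenbasis

theorem Matrix.IsHermitian.toLpLin_eigenvectorBasis {ι : Type*} [Fintype ι] [DecidableEq ι]
    {A : Matrix ι ι ℝ} (hA : A.IsHermitian) (j : ι) :
    toLpLin 2 2 A (hA.eigenvectorBasis j) = hA.eigenvalues j • hA.eigenvectorBasis j :=
  ofLp_injective 2 (hA.mulVec_eigenvectorBasis j)

section Frobenius

attribute [local instance] Matrix.frobeniusNormedAddCommGroup

theorem frobNorm_eq_norm {n : ℕ} (M : Matrix (Fin n) (Fin n) ℝ) : frobNorm M = ‖M‖ := by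
  simp [frobNorm, frobenius_norm_def, Real.sqrt_eq_rpow]

theorem norm_toLpLin_le_frobNorm {n : ℕ} (M : Matrix (Fin n) (Fin n) ℝ)
    (x : EuclideanSpace ℝ (Fin n)) : ‖toLpLin 2 2 M x‖ ≤ frobNorm M * ‖x‖ := by
  rw [frobNorm_eq_norm, toLpLin_apply, ← frobenius_norm_replicateCol (ι := Unit),
    replicateCol_mulVec, ← frobenius_norm_replicateCol (ι := Unit) (ofLp x)]
  exact frobenius_norm_mul _ _

end Frobenius

theorem abs_inner_toLpLin_sub_le {n : ℕ} (A B : Matrix (Fin n) (Fin n) ℝ)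
    (x : EuclideanSpace ℝ (Fin n)) :
    |⟪toLpLin 2 2 A x, x⟫ - ⟪toLpLin 2 2 B x, x⟫| ≤ frobNorm (A - B) * ‖x‖ ^ 2 := by
  rw [← inner_sub_left, ← LinearMap.sub_apply, ← map_sub, sq, ← mul_assoc]
  exact (abs_real_inner_le_norm _ _).trans
    (mul_le_mul_of_nonneg_right (norm_toLpLin_le_frobNorm _ _) (norm_nonneg _))

theorem card_filter_lt_le_card_filter_lt_add {ι : Type*} [Fintype ι] (f : ι → ℝ) {s t : ℝ}
    (p : ℝ → Prop) [DecidablePred p] (hp : ∀ y, s < y → y ≤ t → p y) :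
    #{i | s < f i} ≤ #{i | t < f i} + #{i | p (f i)} := by
  classical
  refine (card_le_card fun i hi => ?_).trans (card_union_le _ _)
  simp only [mem_filter, mem_univ, true_and, mem_union] at hi ⊢
  exact (lt_or_ge t (f i)).imp_right (hp _ hi)

theorem card_filter_comp_equiv {α β : Type*} [Fintype α] [Fintype β] (e : α ≃ β)
    (p : β → Prop) [DecidablePred p] : #{i | p (e i)} = #{j | p j} :=
  card_equiv e (by simp)

theorem index_change_le_small_eigenvalues_general (n : ℕ)
    (A B : Matrix (Fin n) (Fin n) ℝ) (hA : A.IsHermitian) (hB : B.IsHermitian)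
    (a b : Fin n → ℝ)
    (hpa : ∃ σ : Equiv.Perm (Fin n), a = hA.eigenvalues ∘ σ)
    (hpb : ∃ σ : Equiv.Perm (Fin n), b = hB.eigenvalues ∘ σ) :
    |((Finset.univ.filter fun i => 0 < a i).card : ℤ) -
        ((Finset.univ.filter fun i => 0 < b i).card : ℤ)| ≤
      ((Finset.univ.filter fun i => |b i| ≤ frobNorm (A - B)).card : ℤ) := by
  obtain ⟨σ, rfl⟩ := hpa
  obtain ⟨τ, rfl⟩ := hpb
  set r := frobNorm (A - B)
  simp only [Function.comp_apply, card_filter_comp_equiv σ (fun y => 0 < hA.eigenvalues y),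
    card_filter_comp_equiv τ (fun y => 0 < hB.eigenvalues y),
    card_filter_comp_equiv τ (fun y => |hB.eigenvalues y| ≤ r)]
  have hr : 0 ≤ r := Real.sqrt_nonneg _
  have hAB : #{i | 0 < hA.eigenvalues i} ≤ #{i | -r < hB.eigenvalues i} :=
    card_lt_le_card_lt_of_lt_inner_imp hA.toLpLin_eigenvectorBasis hB.toLpLin_eigenvectorBasis
      fun x _ hx => by linarith [(abs_le.mp (abs_inner_toLpLin_sub_le A B x)).2]
  have hBA : #{i | r < hB.eigenvalues i} ≤ #{i | 0 < hA.eigenvalues i} :=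
    card_lt_le_card_lt_of_lt_inner_imp hB.toLpLin_eigenvectorBasis hA.toLpLin_eigenvectorBasis
      fun x _ hx => by linarith [(abs_le.mp (abs_inner_toLpLin_sub_le A B x)).1]
  have hB₁ := card_filter_lt_le_card_filter_lt_add hB.eigenvalues (s := -r) (t := 0)
    (fun y => |y| ≤ r) fun y hy hy' => abs_le.mpr ⟨hy.le, hy'.trans hr⟩
  have hB₂ := card_filter_lt_le_card_filter_lt_add hB.eigenvalues (s := 0) (t := r)
    (fun y => |y| ≤ r) fun y hy hy' => abs_le.mpr ⟨(neg_nonpos.mpr hr).trans hy.le, hy'⟩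
  rw [abs_sub_le_iff]
  omega

/-- **Stability of the index.**  Let `A`, `B` be real symmetric `n×n` matrices with
eigenvalues `a 0 ≤ a 1 ≤ ⋯` and `b 0 ≤ b 1 ≤ ⋯` listed in nondecreasing order with
multiplicity.  Then `|i⁺(A) - i⁺(B)|` is at most the number of eigenvalues of `B` whose
absolute value is at most `‖A - B‖_F`. -/
theorem index_change_le_small_eigenvalues (n : ℕ)
    (A B : Matrix (Fin n) (Fin n) ℝ) (hA : A.IsHermitian) (hB : B.IsHermitian)
    (a b : Fin n → ℝ) (ha : Monotone a) (hb : Monotone b)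
    (hpa : ∃ σ : Equiv.Perm (Fin n), a = hA.eigenvalues ∘ σ)
    (hpb : ∃ σ : Equiv.Perm (Fin n), b = hB.eigenvalues ∘ σ) :
    |((Finset.univ.filter fun i => 0 < a i).card : ℤ) -
        ((Finset.univ.filter fun i => 0 < b i).card : ℤ)| ≤
      ((Finset.univ.filter fun i => |b i| ≤ frobNorm (A - B)).card : ℤ) :=
  index_change_le_small_eigenvalues_general n A B hA hB a b hpa hpb
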